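/- arXiv:math/9908108 — 2 statements merged into one kernel-verified Lean document; each statement's English description precedes it below -/
import Mathlib

section
/- Let V be a vertex operator algebra and W a weak V-module. For z ∈ ℂ^×, let D_{P(z)}(W) ⊆ W* be the space of functionals α such that for each v ∈ V some (x-z)^k Y*(v,x)α lies in W*((x)), and let D(W) ⊆ W* be the space of α with Y*(v,x)α ∈ W*((x)) for all v. Then ⋂_{z ∈ ℂ^×} D_{P(z)}(W) = D(W). -/
/-!
With `S` the shift `f ↦ (n ↦ f (n + 1))` on `ℤ`-indexed sequences, the coefficients of
`(x - z)^k Y*(v,x)α` are `(S - z)^k` applied to the mode sequence `n ↦ v*ₙα`, so `α ∈ 𝒟_{P(z)}(W)`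
says that this sequence is eventually annihilated by some power of `S - z`. For `z₁ ≠ z₂` the
polynomials `(X - z₁)^k₁` and `(X - z₂)^k₂` are coprime, and applying a Bézout identity
`a (X - z₁)^k₁ + b (X - z₂)^k₂ = 1` in `S` shows that the sequence itself is eventually zero.
Hence already `𝒟_{P(1)}(W) ∩ 𝒟_{P(2)}(W) = D(W)`.
-/

/-- The generalized binomial coefficient `C(m,i) = m(m-1)⋯(m-i+1)/i!` for `m : ℤ`. -/
noncomputable def gbinom (m : ℤ) (i : ℕ) : ℂ :=
  (∏ j ∈ Finset.range i, ((m : ℂ) - j)) / (Nat.factorial i : ℂ)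

/-- A vertex (operator) algebra structure on a complex vector space `V`, recorded in
terms of the modes `Y v n = vₙ` of the vertex operators `Y(v,x) = ∑ₙ vₙ x^{-n-1}`,
together with the vacuum vector and the Virasoro (conformal) vector.  The Jacobi
identity is recorded in its equivalent component (Borcherds identity) form; all the
sums appearing are finitely supported by the truncation condition, and are taken as
`finsum`s. -/
structure VertexAlgebra (V : Type*) [AddCommGroup V] [Module ℂ V] where
  /-- the mode `vₙ` of `Y(v,x)` -/
  Y : V → ℤ → V → V
  /-- the vacuum vector `𝟙` -/
  vac : V
  /-- the Virasoro (conformal) vector `ω`; `L(n) = ω_{n+1}` -/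
  omega : V
  lin_left : ∀ (n : ℤ) (w : V), IsLinearMap ℂ fun v => Y v n w
  lin_right : ∀ (v : V) (n : ℤ), IsLinearMap ℂ (Y v n)
  /-- truncation: `uₙ v = 0` for `n` sufficiently large -/
  trunc : ∀ u v : V, ∃ N : ℤ, ∀ n ≥ N, Y u n v = 0
  /-- the vacuum property `Y(𝟙,x) = 1` -/
  vacuum : ∀ (v : V) (n : ℤ), Y vac n v = if n = -1 then v else 0
  /-- the creation property `Y(v,x)𝟙 ∈ V[[x]]`, `lim_{x→0} Y(v,x)𝟙 = v` -/
  creation_nonneg : ∀ (v : V) (n : ℤ), 0 ≤ n → Y v n vac = 0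
  creation : ∀ v : V, Y v (-1) vac = v
  /-- the Jacobi identity, in component (Borcherds identity) form -/
  borcherds : ∀ (u v w : V) (m n k : ℤ),
    ∑ᶠ i : ℕ, gbinom m i • Y (Y u (k + i) v) (m + n - i) w
      = ∑ᶠ i : ℕ, ((-1 : ℂ) ^ i * gbinom k i) •
          (Y u (m + k - i) (Y v (n + i) w)
            - ((-1 : ℂ) ^ k • Y v (n + k - i) (Y u (m + i) w)))

/-- A weak module for a vertex algebra: a complex vector space with mode actions
`act v n`, satisfying truncation, the vacuum property and the Jacobi identity
(in component form), but with no grading assumptions. -/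
structure WeakModule {V : Type*} [AddCommGroup V] [Module ℂ V]
    (A : VertexAlgebra V) (W : Type*) [AddCommGroup W] [Module ℂ W] where
  act : V → ℤ → W → W
  lin_left : ∀ (n : ℤ) (w : W), IsLinearMap ℂ fun v => act v n w
  lin_right : ∀ (v : V) (n : ℤ), IsLinearMap ℂ (act v n)
  trunc : ∀ (v : V) (w : W), ∃ N : ℤ, ∀ n ≥ N, act v n w = 0
  vacuum : ∀ (w : W) (n : ℤ), act A.vac n w = if n = -1 then w else 0
  borcherds : ∀ (u v : V) (w : W) (m n k : ℤ),
    ∑ᶠ i : ℕ, gbinom m i • act (A.Y u (k + i) v) (m + n - i) w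
      = ∑ᶠ i : ℕ, ((-1 : ℂ) ^ i * gbinom k i) •
          (act u (m + k - i) (act v (n + i) w)
            - ((-1 : ℂ) ^ k • act v (n + k - i) (act u (m + i) w)))

variable {V W : Type*} [AddCommGroup V] [Module ℂ V] [AddCommGroup W] [Module ℂ W]

/-- The space `𝒟_{P(z)}(W) ⊆ W*`: functionals `α` such that for every `v ∈ V` there is
`k ∈ ℕ` with `(x-z)^k Y*(v,x)α ∈ W*((x))`; the coefficient of `x^{-n-1}` of
`(x-z)^k Y*(v,x)α` is `∑_{i=0}^{k} C(k,i)(-z)^i v*_{n+k-i}α`, and membership in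
`W*((x))` means these vanish for `n` sufficiently large. -/
def DPz (star : V → ℤ → (W → ℂ) → (W → ℂ)) (z : ℂ) : Set (W → ℂ) :=
  {α | ∀ v : V, ∃ k : ℕ, ∃ N : ℤ, ∀ n ≥ N,
    (∑ i ∈ Finset.range (k + 1),
      ((k.choose i : ℂ) * (-z) ^ i) • star v (n + k - i) α) = 0}

/-- The space `D(W) ⊆ W*`: functionals `α` with `Y*(v,x)α ∈ W*((x))` for all `v`. -/
def DW (star : V → ℤ → (W → ℂ) → (W → ℂ)) : Set (W → ℂ) :=
  {α | ∀ v : V, ∃ N : ℤ, ∀ n ≥ N, star v n α = 0}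

open Polynomial Filter

section IntShift

variable (R : Type*) {M : Type*} [CommSemiring R] [AddCommMonoid M] [Module R M]

noncomputable def intShift : Module.End R (ℤ → M) :=
  LinearMap.funLeft R M (· + 1)

variable {R}

lemma intShift_pow_apply (j : ℕ) (f : ℤ → M) (n : ℤ) : (intShift R ^ j) f n = f (n + j) := by
  induction j generalizing f with
  | zero => simp
  | succ j ih =>
    rw [pow_succ, Module.End.mul_apply, ih]
    simp only [intShift, LinearMap.funLeft_apply]
    push_cast
    ring_nf

lemma aeval_intShift_apply (p : R[X]) (f : ℤ → M) (n : ℤ) :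
    aeval (intShift R) p f n = ∑ j ∈ Finset.range (p.natDegree + 1), p.coeff j • f (n + j) := by
  simp only [aeval_eq_sum_range, LinearMap.coe_sum, Finset.sum_apply, LinearMap.smul_apply,
    Pi.smul_apply, intShift_pow_apply]

lemma eventually_aeval_intShift_eq_zero (p : R[X]) {f : ℤ → M}
    (hf : ∀ᶠ n in atTop, f n = 0) : ∀ᶠ n in atTop, aeval (intShift R) p f n = 0 := by
  obtain ⟨N, hN⟩ := eventually_atTop.1 hf
  filter_upwards [eventually_ge_atTop N] with n hn
  rw [aeval_intShift_apply]
  exact Finset.sum_eq_zero fun j _ => by rw [hN (n + j) (by omega), smul_zero]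

lemma eventually_eq_zero_of_isCoprime {p q : R[X]} (hpq : IsCoprime p q) {f : ℤ → M}
    (hp : ∀ᶠ n in atTop, aeval (intShift R) p f n = 0)
    (hq : ∀ᶠ n in atTop, aeval (intShift R) q f n = 0) : ∀ᶠ n in atTop, f n = 0 := by
  obtain ⟨a, b, hab⟩ := hpq
  filter_upwards [eventually_aeval_intShift_eq_zero a hp,
    eventually_aeval_intShift_eq_zero b hq] with n ha hb
  calc f n = aeval (intShift R) (a * p + b * q) f n := by rw [hab, map_one]; rfl
    _ = aeval (intShift R) a (aeval (intShift R) p f) n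
        + aeval (intShift R) b (aeval (intShift R) q f) n := by
      rw [map_add, map_mul, map_mul]; rfl
    _ = 0 := by rw [ha, hb, add_zero]

end IntShift

lemma aeval_intShift_X_sub_C_pow_apply {R M : Type*} [CommRing R] [AddCommGroup M] [Module R M]
    (z : R) (k : ℕ) (f : ℤ → M) (n : ℤ) :
    aeval (intShift R) ((X - C z) ^ k) f n
      = ∑ i ∈ Finset.range (k + 1), ((k.choose i : R) * (-z) ^ i) • f (n + k - i) := by
  rw [sub_eq_neg_add, ← C_neg, add_pow, map_sum, LinearMap.coe_sum, Finset.sum_apply,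
    Finset.sum_apply]
  refine Finset.sum_congr rfl fun i hi => ?_
  have hik : i ≤ k := Nat.lt_succ_iff.1 (Finset.mem_range.1 hi)
  rw [map_mul, map_mul, map_pow, aeval_C, map_natCast, aeval_X_pow]
  simp only [Module.End.mul_apply, Module.End.natCast_apply, ← map_pow, Module.algebraMap_end_apply,
    map_nsmul, Pi.smul_apply, intShift_pow_apply, mul_smul, Nat.cast_smul_eq_nsmul, Nat.cast_sub hik]
  rw [add_sub_assoc]

section DualModes

variable {V W : Type*} (star : V → ℤ → (W → ℂ) → (W → ℂ))

lemma mem_DPz_iff {z : ℂ} {α : W → ℂ} : α ∈ DPz star z ↔ ∀ v, ∃ k : ℕ,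
    ∀ᶠ n in atTop, aeval (intShift ℂ) ((X - C z) ^ k) (fun m => star v m α) n = 0 := by
  simp only [DPz, Set.mem_ofPred_eq, aeval_intShift_X_sub_C_pow_apply, eventually_atTop]

lemma mem_DW_iff {α : W → ℂ} : α ∈ DW star ↔ ∀ v, ∀ᶠ n in atTop, star v n α = 0 := by
  simp only [DW, Set.mem_ofPred_eq, eventually_atTop]

lemma DW_subset_DPz (z : ℂ) : DW star ⊆ DPz star z := by
  intro α hα
  rw [mem_DPz_iff]
  exact fun v => ⟨0, by simpa using (mem_DW_iff star).1 hα v⟩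

lemma DPz_inter_DPz_eq_DW {z₁ z₂ : ℂ} (hz : z₁ ≠ z₂) : DPz star z₁ ∩ DPz star z₂ = DW star := by
  refine subset_antisymm (fun α ⟨h₁, h₂⟩ => (mem_DW_iff star).2 fun v => ?_)
    (Set.subset_inter (DW_subset_DPz star z₁) (DW_subset_DPz star z₂))
  obtain ⟨k₁, hk₁⟩ := (mem_DPz_iff star).1 h₁ v
  obtain ⟨k₂, hk₂⟩ := (mem_DPz_iff star).1 h₂ v
  have hcop : IsCoprime ((X - C z₁) ^ k₁) ((X - C z₂) ^ k₂) :=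
    (isCoprime_X_sub_C_of_isUnit_sub (sub_ne_zero.2 hz).isUnit).pow
  exact eventually_eq_zero_of_isCoprime hcop hk₁ hk₂

end DualModes

theorem stmt15_general (star : V → ℤ → (W → ℂ) → (W → ℂ)) :
    ⋂ z ∈ {z : ℂ | z ≠ 0}, DPz (W := W) star z = DW star := by
  apply subset_antisymm
  · calc ⋂ z ∈ {z : ℂ | z ≠ 0}, DPz star z
        ⊆ DPz star 1 ∩ DPz star 2 :=
          Set.subset_inter (Set.biInter_subset_of_mem one_ne_zero)
            (Set.biInter_subset_of_mem two_ne_zero)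
      _ = DW star := DPz_inter_DPz_eq_DW star (by norm_num)
  · exact Set.subset_iInter₂ fun z _ => DW_subset_DPz star z

/-- for a vertex operator algebra `V`, a weak `V`-module `W`, and the
modes `star v n = v*ₙ` of the dual vertex operators `Y*(v,x)` on `W*`,
`⋂_{z ∈ ℂˣ} 𝒟_{P(z)}(W) = D(W)`. -/
theorem stmt15 (A : VertexAlgebra V) (M : WeakModule A W)
    (star : V → ℤ → (W → ℂ) → (W → ℂ)) :
    ⋂ z ∈ {z : ℂ | z ≠ 0}, DPz (W := W) star z = DW star :=
  stmt15_general star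
end

section
/- Let V₁, V₂ be vertex operator algebras, W a weak V₁⊗V₂-module, and W₂ a finitely generated weak V₂-module (V₂ acting via 1⊗V₂ on W). Then Hom_{V₂}(W₂, W) is a weak V₁-module under (Y(v₁,x)f)(w₂) := Y(v₁⊗1, x)(f(w₂)); in particular, the truncation condition holds: for each v₁ ∈ V₁ and f ∈ Hom_{V₂}(W₂,W), there is r ∈ ℕ with x^r (Y(v₁,x)f)(w₂) ∈ W[[x]] for all w₂ ∈ W₂. -/
/-! The modes `(v₁)ₙ ∘ f` commute with the `V₂`-action, so the kernel of each is a
`V₂`-submodule of `W₂`. Once `n` exceeds the truncation bounds of a finite spanning set of `P`,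
that kernel contains `P`, hence is all of `W₂`. -/

open Filter LinearMap

theorem Submodule.FG.eventually_le_ker {R M N ι : Type*} [Semiring R]
    [AddCommMonoid M] [Module R M] [AddCommMonoid N] [Module R N]
    {S : Submodule R M} (hS : S.FG) {l : Filter ι} {φ : ι → M →ₗ[R] N}
    (hφ : ∀ w ∈ S, ∀ᶠ i in l, φ i w = 0) : ∀ᶠ i in l, S ≤ ker (φ i) := by
  obtain ⟨s, rfl⟩ := hS
  filter_upwards [(eventually_all_finset s).2 fun w hw => hφ w (Submodule.subset_span hw)]
    with i hi
  exact Submodule.span_le.2 hi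

namespace WeakModule

variable {V : Type*} [AddCommGroup V] [Module ℂ V] {A : VertexAlgebra V}
  {W W' : Type*} [AddCommGroup W] [Module ℂ W] [AddCommGroup W'] [Module ℂ W']

def mode (N : WeakModule A W) (v : V) (n : ℤ) : W →ₗ[ℂ] W :=
  (N.lin_right v n).mk' _

theorem eventually_act_eq_zero (N : WeakModule A W) (v : V) (w : W) :
    ∀ᶠ n in atTop, N.act v n w = 0 :=
  eventually_atTop.2 (N.trunc v w)

theorem act_mem_ker_of_intertwines (M : WeakModule A W') (N : WeakModule A W)
    {g : W' →ₗ[ℂ] W} (hg : ∀ (v : V) (n : ℤ) (w : W'), g (M.act v n w) = N.act v n (g w))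
    (v : V) (n : ℤ) {w : W'} (hw : w ∈ ker g) : M.act v n w ∈ ker g := by
  rw [LinearMap.mem_ker] at hw ⊢
  rw [hg, hw, (N.lin_right v n).map_zero]

end WeakModule

/-- let `V₁, V₂` be vertex operator algebras and let `W` be a weak
`V₁ ⊗ V₂`-module, i.e. `W` carries commuting weak `V₁`- and `V₂`-module structures
(`V₁` and `V₂` act through `V₁ ⊗ 𝟙` and `𝟙 ⊗ V₂`).  Let `W₂` be a weak `V₂`-module
generated by a finite-dimensional subspace `P` under the modes of `V₂`.  Then
`Hom_{V₂}(W₂, W)` is a weak `V₁`-module under `(Y(v₁,x)f)(w₂) := Y(v₁⊗𝟙,x)(f(w₂))`;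
in particular the truncation condition holds: for each `v₁` and each `V₂`-homomorphism
`f`, there is `r` with `x^r (Y(v₁,x)f)(w₂) ∈ W[[x]]` for all `w₂ ∈ W₂`, i.e. the modes
`(v₁)ₙ ∘ f` vanish for all `n ≥ r` uniformly in `w₂`; and each mode of `Y(v₁,x)f` is
again a `V₂`-homomorphism. -/
theorem stmt17 {V₁ V₂ W₂ W : Type*}
    [AddCommGroup V₁] [Module ℂ V₁] [AddCommGroup V₂] [Module ℂ V₂]
    [AddCommGroup W₂] [Module ℂ W₂] [AddCommGroup W] [Module ℂ W]
    (A₁ : VertexAlgebra V₁) (A₂ : VertexAlgebra V₂)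
    (M₂ : WeakModule A₂ W₂) (N₁ : WeakModule A₁ W) (N₂ : WeakModule A₂ W)
    (hcommute : ∀ (v₁ : V₁) (v₂ : V₂) (m n : ℤ) (w : W),
      N₁.act v₁ m (N₂.act v₂ n w) = N₂.act v₂ n (N₁.act v₁ m w))
    (P : Submodule ℂ W₂) (hPfin : FiniteDimensional ℂ P)
    (hPgen : ∀ S : Submodule ℂ W₂, P ≤ S →
      (∀ (v : V₂) (n : ℤ), ∀ w ∈ S, M₂.act v n w ∈ S) → S = ⊤)
    (f : W₂ →ₗ[ℂ] W)
    (hf : ∀ (v : V₂) (n : ℤ) (w₂ : W₂), f (M₂.act v n w₂) = N₂.act v n (f w₂))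
    (v₁ : V₁) :
    (∃ r : ℤ, ∀ n ≥ r, ∀ w₂ : W₂, N₁.act v₁ n (f w₂) = 0) ∧
    (∀ (n : ℤ) (v : V₂) (n' : ℤ) (w₂ : W₂),
      N₁.act v₁ n (f (M₂.act v n' w₂)) = N₂.act v n' (N₁.act v₁ n (f w₂))) := by
  have hmode : ∀ (n : ℤ) (v : V₂) (n' : ℤ) (w₂ : W₂),
      N₁.act v₁ n (f (M₂.act v n' w₂)) = N₂.act v n' (N₁.act v₁ n (f w₂)) := by
    intro n v n' w₂
    rw [hf, hcommute]
  refine ⟨?_, hmode⟩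
  have hP : ∀ᶠ n in atTop, P ≤ ker (N₁.mode v₁ n ∘ₗ f) :=
    ((Submodule.fg_iff_finiteDimensional P).2 hPfin).eventually_le_ker
      fun w _ => N₁.eventually_act_eq_zero v₁ (f w)
  obtain ⟨r, hr⟩ := eventually_atTop.1 hP
  refine ⟨r, fun n hn w₂ => ?_⟩
  have hker : ker (N₁.mode v₁ n ∘ₗ f) = ⊤ :=
    hPgen _ (hr n hn) fun v n' _ hw => M₂.act_mem_ker_of_intertwines N₂ (hmode n) v n' hw
  exact LinearMap.congr_fun (ker_eq_top.1 hker) w₂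
end
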